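/- Let f ∈ L^∞(ℝ²) be nonnegative with J(f) = ∫ |x|² f dx < ∞, and let f* be its symmetric-decreasing rearrangement. Then ‖f − f*‖_{L¹}² ≤ 4π ‖f‖_{L^∞} (J(f) − J(f*)). -/

import Mathlib

open MeasureTheory

noncomputable abbrev E2 : Type := EuclideanSpace ℝ (Fin 2)

/-- Radius of the origin-centered disk with the same measure as the
super-level set `{f > ξ}`. -/
noncomputable def levelRadius (f : E2 → ℝ) (ξ : ℝ) : ℝ :=
  Real.sqrt ((volume {y : E2 | ξ < f y}).toReal / Real.pi)

/-- Symmetric-decreasing rearrangement via the layer-cake formula: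
`f*(x) = ∫₀^∞ 1_{{f > ξ}*}(x) dξ`. -/
noncomputable def rearrangement (f : E2 → ℝ) (x : E2) : ℝ :=
  ∫ ξ in Set.Ioi (0 : ℝ), if ‖x‖ < levelRadius f ξ then (1 : ℝ) else 0

/-!
Layer cake: `f` and `f*` are the integrals over `ξ > 0` of the indicators of the superlevel set
`A_ξ = {f > ξ}` and of the disk `B_ξ` of the same area, so `‖f - f*‖₁ ≤ ∫₀^M |A_ξ ∆ B_ξ| dξ` with
`M = ‖f‖_∞`, while `J(f) - J(f*) = ∫₀^∞ (J(1_{A_ξ}) - J(1_{B_ξ})) dξ`. If `B` is the disk of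
radius `ρ` and `|A| = |B|`, then `δ = |A \ B| = |B \ A|`; the set `A \ B` meets each annulus
`ρ² ≤ |x|² ≤ ρ² + t` in area at most `πt`, so `∫_{A \ B} (|x|² - ρ²) ≥ δ² / (2π)`, and likewise
`∫_{B \ A} (ρ² - |x|²) ≥ δ² / (2π)`. Hence `|A ∆ B|² = 4δ² ≤ 4π (J(1_A) - J(1_B))`, and
Cauchy–Schwarz on `[0, M]` finishes.
-/

open Set Metric ENNReal Real
open scoped symmDiff

section General

variable {α : Type*} [MeasurableSpace α] {μ : Measure α}

theorem sq_measure_le_of_measure_sublevel_le {S : Set α} {g : α → ℝ} {c : ℝ} (hc : 0 < c)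
    (hS : MeasurableSet S) (hSfin : μ S ≠ ∞) (hg : Measurable g) (hg0 : ∀ x ∈ S, 0 ≤ g x)
    (hsub : ∀ t, 0 < t → μ (S ∩ {x | g x ≤ t}) ≤ ENNReal.ofReal (c * t)) :
    μ S ^ 2 ≤ ENNReal.ofReal (2 * c) * ∫⁻ x in S, ENNReal.ofReal (g x) ∂μ := by
  set δ := μ.real S
  have hδ : 0 ≤ δ := measureReal_nonneg
  have hlayer : ∫⁻ x in S, ENNReal.ofReal (g x) ∂μ = ∫⁻ t in Ioi 0, μ (S ∩ {x | t < g x}) := by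
    rw [lintegral_eq_lintegral_meas_lt _ ((ae_restrict_iff' hS).2 (.of_forall hg0))
      hg.aemeasurable]
    refine setLIntegral_congr_fun measurableSet_Ioi fun t _ => ?_
    rw [Measure.restrict_apply (measurableSet_lt measurable_const hg), inter_comm]
  have hsuper : ∀ t ∈ Ioc 0 (δ / c), ENNReal.ofReal (δ - c * t) ≤ μ (S ∩ {x | t < g x}) := by
    intro t ht
    have hsplit : μ S ≤ μ (S ∩ {x | g x ≤ t}) + μ (S ∩ {x | t < g x}) :=
      (measure_mono fun x hx => by
        by_cases h : g x ≤ t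
        exacts [Or.inl ⟨hx, h⟩, Or.inr ⟨hx, not_le.1 h⟩]).trans (measure_union_le _ _)
    rw [ENNReal.ofReal_sub _ (by positivity [ht.1.le]), ofReal_measureReal hSfin]
    exact (tsub_le_tsub_left (hsub t ht.1) _).trans (tsub_le_iff_left.2 hsplit)
  have hint : ∫ t in Ioc 0 (δ / c), (δ - c * t) = δ ^ 2 / (2 * c) := by
    rw [← intervalIntegral.integral_of_le (by positivity), intervalIntegral.integral_sub
      intervalIntegrable_const (intervalIntegral.intervalIntegrable_id.const_mul c),
      intervalIntegral.integral_const_mul, integral_id, intervalIntegral.integral_const,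
      smul_eq_mul]
    field_simp
    ring
  calc μ S ^ 2 = ENNReal.ofReal (2 * c) * ENNReal.ofReal (δ ^ 2 / (2 * c)) := by
        rw [← ENNReal.ofReal_mul (by positivity), mul_div_cancel₀ _ (by positivity),
          ENNReal.ofReal_pow hδ, ofReal_measureReal hSfin]
    _ = ENNReal.ofReal (2 * c) * ∫⁻ t in Ioc 0 (δ / c), ENNReal.ofReal (δ - c * t) := by
        rw [← hint, ofReal_integral_eq_lintegral_ofReal (f := fun t => δ - c * t)
          (continuous_const.sub (continuous_const_mul c)).integrableOn_Ioc]
        refine (ae_restrict_iff' measurableSet_Ioc).2 (.of_forall fun t ht => ?_)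
        have := (le_div_iff₀' hc).1 ht.2
        simp only [Pi.zero_apply]
        linarith
    _ ≤ ENNReal.ofReal (2 * c) * ∫⁻ t in Ioi 0, μ (S ∩ {x | t < g x}) := by
        gcongr ENNReal.ofReal (2 * c) * ?_
        exact (setLIntegral_mono' measurableSet_Ioc hsuper).trans
          (lintegral_mono_set Ioc_subset_Ioi_self)
    _ = _ := by rw [hlayer]

theorem lintegral_mul_measure_slice {β : Type*} [MeasurableSpace β] [SFinite μ] {ν : Measure β}
    [SFinite ν] {K : α → ℝ≥0∞} (hK : Measurable K) {s : Set (α × β)} (hs : MeasurableSet s) :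
    ∫⁻ x, K x * ν (Prod.mk x ⁻¹' s) ∂μ = ∫⁻ y, ∫⁻ x in (·, y) ⁻¹' s, K x ∂μ ∂ν := by
  have hdens := lintegral_withDensity_eq_lintegral_mul μ hK
    (measurable_measure_prodMk_left (ν := ν) hs)
  simp only [Pi.mul_apply] at hdens
  rw [← hdens, ← Measure.prod_apply hs, Measure.prod_apply_symm hs]
  exact lintegral_congr fun y => withDensity_apply _ (measurable_prodMk_right hs)

theorem sq_lintegral_le_measure_univ_mul {g : α → ℝ≥0∞} (hg : AEMeasurable g μ) :
    (∫⁻ x, g x ∂μ) ^ 2 ≤ μ univ * ∫⁻ x, g x ^ 2 ∂μ := by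
  have h := ENNReal.lintegral_mul_le_Lp_mul_Lq μ Real.HolderConjugate.two_two hg
    (aemeasurable_const (b := (1 : ℝ≥0∞)))
  simp only [Pi.mul_apply, mul_one, ENNReal.one_rpow, lintegral_const, one_mul] at h
  calc (∫⁻ x, g x ∂μ) ^ 2
      ≤ ((∫⁻ x, g x ^ (2 : ℝ) ∂μ) ^ (1 / 2 : ℝ) * μ univ ^ (1 / 2 : ℝ)) ^ 2 := by gcongr
    _ = μ univ * ∫⁻ x, g x ^ 2 ∂μ := by
        rw [mul_pow, ← ENNReal.rpow_natCast, ← ENNReal.rpow_natCast, ← ENNReal.rpow_mul,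
          ← ENNReal.rpow_mul]
        norm_num [mul_comm]

end General

section Plane

theorem volume_sq_norm_mem_Icc_le {a b : ℝ} (hab : a ≤ b) :
    volume {x : E2 | a ≤ ‖x‖ ^ 2 ∧ ‖x‖ ^ 2 ≤ b} ≤ ENNReal.ofReal (π * (b - a)) := by
  have hsub : {x : E2 | a ≤ ‖x‖ ^ 2 ∧ ‖x‖ ^ 2 ≤ b} ⊆ closedBall 0 √b \ ball 0 √a := by
    rintro x ⟨hax, hxb⟩
    refine ⟨mem_closedBall_zero_iff.2 (Real.le_sqrt_of_sq_le hxb), fun hx => ?_⟩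
    have := Real.sqrt_le_sqrt hax
    rw [Real.sqrt_sq (norm_nonneg x)] at this
    exact (mem_ball_zero_iff.1 hx).not_ge this
  refine (measure_mono hsub).trans ((measure_sdiff_le_iff_le_add
    measurableSet_ball.nullMeasurableSet
    (ball_subset_closedBall.trans (closedBall_subset_closedBall (Real.sqrt_le_sqrt hab)))
    measure_ball_lt_top.ne).2 ?_)
  simp only [EuclideanSpace.volume_ball_fin_two, EuclideanSpace.volume_closedBall_fin_two]
  rw [← ENNReal.ofReal_pow (Real.sqrt_nonneg _), ← ENNReal.ofReal_pow (Real.sqrt_nonneg _),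
    ← ENNReal.ofReal_mul (sq_nonneg _), ← ENNReal.ofReal_mul (sq_nonneg _),
    ← ENNReal.ofReal_add (by positivity) (mul_nonneg pi_pos.le (sub_nonneg.2 hab)),
    Real.sq_sqrt', Real.sq_sqrt']
  refine ENNReal.ofReal_le_ofReal ?_
  have := pi_pos
  rcases le_total a 0 with ha | ha <;> rcases le_total b 0 with hb | hb <;>
    simp only [max_eq_left, max_eq_right, ha, hb] <;> nlinarith

theorem lintegral_sq_norm_ge_of_outside_ball {S : Set E2}
    (hS : MeasurableSet S) (hSfin : volume S ≠ ∞) {ρ : ℝ} (hρ : 0 ≤ ρ)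
    (hout : ∀ x ∈ S, ρ ≤ ‖x‖) :
    ENNReal.ofReal (2 * π) * (ENNReal.ofReal (ρ ^ 2) * volume S) + volume S ^ 2 ≤
      ENNReal.ofReal (2 * π) * ∫⁻ x in S, ENNReal.ofReal (‖x‖ ^ 2) := by
  have hsq : ∀ x ∈ S, ρ ^ 2 ≤ ‖x‖ ^ 2 := fun x hx => pow_le_pow_left₀ hρ (hout x hx) 2
  have hsplit : ∫⁻ x in S, ENNReal.ofReal (‖x‖ ^ 2) = ENNReal.ofReal (ρ ^ 2) * volume S +
      ∫⁻ x in S, ENNReal.ofReal (‖x‖ ^ 2 - ρ ^ 2) := by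
    rw [← setLIntegral_const, ← lintegral_add_left measurable_const]
    refine setLIntegral_congr_fun hS fun x hx => ?_
    rw [← ENNReal.ofReal_add (sq_nonneg _) (sub_nonneg.2 (hsq x hx)), add_sub_cancel]
  rw [hsplit, mul_add]
  refine add_le_add le_rfl (sq_measure_le_of_measure_sublevel_le pi_pos hS hSfin (by fun_prop)
    (fun x hx => sub_nonneg.2 (hsq x hx)) fun t ht => ?_)
  refine (measure_mono fun x hx => ?_).trans ((volume_sq_norm_mem_Icc_le (a := ρ ^ 2)
    (le_add_of_nonneg_right ht.le)).trans_eq (by ring_nf))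
  obtain ⟨hxS, hxt : ‖x‖ ^ 2 - ρ ^ 2 ≤ t⟩ := hx
  exact ⟨hsq x hxS, by linarith⟩

theorem lintegral_sq_norm_le_of_subset_ball {S : Set E2} (hS : MeasurableSet S) {ρ : ℝ}
    (hin : S ⊆ ball 0 ρ) :
    ENNReal.ofReal (2 * π) * (∫⁻ x in S, ENNReal.ofReal (‖x‖ ^ 2)) + volume S ^ 2 ≤
      ENNReal.ofReal (2 * π) * (ENNReal.ofReal (ρ ^ 2) * volume S) := by
  have hsq : ∀ x ∈ S, ‖x‖ ^ 2 ≤ ρ ^ 2 := fun x hx =>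
    pow_le_pow_left₀ (norm_nonneg x) (mem_ball_zero_iff.1 (hin hx)).le 2
  have hsplit : ENNReal.ofReal (ρ ^ 2) * volume S = (∫⁻ x in S, ENNReal.ofReal (‖x‖ ^ 2)) +
      ∫⁻ x in S, ENNReal.ofReal (ρ ^ 2 - ‖x‖ ^ 2) := by
    rw [← lintegral_add_left (measurable_norm.pow_const 2).ennreal_ofReal, ← setLIntegral_const]
    refine setLIntegral_congr_fun hS fun x hx => ?_
    rw [← ENNReal.ofReal_add (sq_nonneg _) (sub_nonneg.2 (hsq x hx)), add_sub_cancel]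
  rw [hsplit, mul_add]
  refine add_le_add le_rfl (sq_measure_le_of_measure_sublevel_le pi_pos hS
    ((measure_mono hin).trans_lt (measure_ball_lt_top (μ := volume))).ne (by fun_prop)
    (fun x hx => sub_nonneg.2 (hsq x hx)) fun t ht => ?_)
  refine (measure_mono fun x hx => ?_).trans ((volume_sq_norm_mem_Icc_le (b := ρ ^ 2)
    (sub_le_self _ ht.le)).trans_eq (by ring_nf))
  obtain ⟨hxS, hxt : ρ ^ 2 - ‖x‖ ^ 2 ≤ t⟩ := hx
  exact ⟨by linarith, hsq x hxS⟩

theorem lintegral_sq_norm_ball_add_sq_volume_symmDiff_le {A : Set E2} (hA : MeasurableSet A)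
    {ρ : ℝ} (hρ : 0 ≤ ρ) (hvol : volume A = volume (ball (0 : E2) ρ)) :
    ENNReal.ofReal (4 * π) * (∫⁻ x in ball (0 : E2) ρ, ENNReal.ofReal (‖x‖ ^ 2)) +
        volume (A ∆ ball (0 : E2) ρ) ^ 2 ≤
      ENNReal.ofReal (4 * π) * ∫⁻ x in A, ENNReal.ofReal (‖x‖ ^ 2) := by
  set B : Set E2 := ball 0 ρ
  have hB : MeasurableSet B := measurableSet_ball
  have hAfin : volume A ≠ ∞ := hvol ▸ measure_ball_lt_top.ne
  have hsymm : volume (B \ A) = volume (A \ B) :=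
    measure_sdiff_symm hB.nullMeasurableSet hA.nullMeasurableSet hvol.symm
      ((measure_mono inter_subset_right).trans_lt hAfin.lt_top).ne
  have hout := lintegral_sq_norm_ge_of_outside_ball (hA.diff hB)
    ((measure_mono sdiff_subset).trans_lt hAfin.lt_top).ne hρ
    fun x hx => not_lt.1 (mt mem_ball_zero_iff.2 hx.2)
  have hin := lintegral_sq_norm_le_of_subset_ball (hB.diff hA) (ρ := ρ) sdiff_subset
  have h4π : ENNReal.ofReal (4 * π) = 2 * ENNReal.ofReal (2 * π) := by
    rw [← ENNReal.ofReal_ofNat 2, ← ENNReal.ofReal_mul zero_le_two]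
    ring_nf
  rw [measure_symmDiff_eq hA.nullMeasurableSet hB.nullMeasurableSet, hsymm,
    ← lintegral_inter_add_sdiff _ A hB, ← lintegral_inter_add_sdiff _ B hA, inter_comm B A, h4π]
  rw [hsymm] at hin
  generalize ENNReal.ofReal (2 * π) = c at hout hin ⊢
  generalize ∫⁻ x in A ∩ B, ENNReal.ofReal (‖x‖ ^ 2) = P
  generalize ∫⁻ x in B \ A, ENNReal.ofReal (‖x‖ ^ 2) = Q at hin ⊢
  generalize ∫⁻ x in A \ B, ENNReal.ofReal (‖x‖ ^ 2) = V at hout ⊢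
  generalize ENNReal.ofReal (ρ ^ 2) * volume (A \ B) = R at hout hin
  generalize volume (A \ B) = δ at hout hin ⊢
  calc 2 * c * (P + Q) + (δ + δ) ^ 2 = 2 * c * P + 2 * (c * Q + δ ^ 2) + 2 * δ ^ 2 := by ring
    _ ≤ 2 * c * P + 2 * (c * R) + 2 * δ ^ 2 := by gcongr
    _ = 2 * c * P + 2 * (c * R + δ ^ 2) := by ring
    _ ≤ 2 * c * P + 2 * (c * V) := by gcongr
    _ = 2 * c * (P + V) := by ring

end Plane

section LevelSets

variable {f : E2 → ℝ}

theorem measurable_levelRadius (f : E2 → ℝ) : Measurable (levelRadius f) := by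
  have hanti : Antitone fun ξ : ℝ => volume {y : E2 | ξ < f y} :=
    fun _ _ hξ => measure_mono fun _ hy => lt_of_le_of_lt hξ hy
  exact Real.continuous_sqrt.measurable.comp (hanti.measurable.ennreal_toReal.div_const _)

theorem volume_superlevel_ne_top (hJ : Integrable (fun x : E2 => ‖x‖ ^ 2 * f x)) {ξ : ℝ}
    (hξ : 0 < ξ) : volume {y : E2 | ξ < f y} ≠ ∞ := by
  have hsub : {y : E2 | ξ < f y} ⊆ ball 0 1 ∪ {y | ξ ≤ ‖‖y‖ ^ 2 * f y‖} := by
    intro y (hy : ξ < f y)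
    refine (lt_or_ge ‖y‖ 1).imp mem_ball_zero_iff.2 fun h => ?_
    have : f y ≤ ‖y‖ ^ 2 * f y := le_mul_of_one_le_left (hξ.trans hy).le (one_le_pow₀ h)
    exact hy.le.trans (this.trans (le_norm_self _))
  exact ((measure_mono hsub).trans_lt ((measure_union_le _ _).trans_lt
    (ENNReal.add_lt_top.2 ⟨measure_ball_lt_top, hJ.measure_norm_ge_lt_top hξ⟩))).ne

theorem volume_ball_levelRadius {ξ : ℝ} (hfin : volume {y : E2 | ξ < f y} ≠ ∞) :
    volume (ball (0 : E2) (levelRadius f ξ)) = volume {y : E2 | ξ < f y} := by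
  rw [EuclideanSpace.volume_ball_fin_two, levelRadius, ← ENNReal.ofReal_pow (Real.sqrt_nonneg _),
    Real.sq_sqrt (by positivity), ← ENNReal.ofReal_mul (by positivity),
    div_mul_cancel₀ _ pi_pos.ne', ofReal_toReal hfin]

theorem volume_superlevel_eq_zero (hbdd : MemLp f ⊤ volume) {ξ : ℝ}
    (hξ : (eLpNorm f ⊤ volume).toReal ≤ ξ) : volume {y : E2 | ξ < f y} = 0 := by
  rw [measure_eq_zero_iff_ae_notMem]
  filter_upwards [ae_le_eLpNormEssSup (f := f) (μ := volume)] with y hy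
  rw [← eLpNorm_exponent_top] at hy
  have : f y ≤ (eLpNorm f ⊤ volume).toReal :=
    (le_norm_self _).trans ((toReal_enorm _).symm.le.trans (ENNReal.toReal_mono hbdd.2.ne hy))
  exact not_lt.2 (this.trans hξ)

theorem levelRadius_eq_zero (hbdd : MemLp f ⊤ volume) {ξ : ℝ}
    (hξ : (eLpNorm f ⊤ volume).toReal ≤ ξ) : levelRadius f ξ = 0 := by
  simp [levelRadius, volume_superlevel_eq_zero hbdd hξ]

theorem rearrangement_eq_measureReal (f : E2 → ℝ) (x : E2) :
    rearrangement f x = (volume.restrict (Ioi 0)).real {ξ | ‖x‖ < levelRadius f ξ} := by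
  have hs : MeasurableSet {ξ | ‖x‖ < levelRadius f ξ} :=
    measurableSet_lt measurable_const (measurable_levelRadius f)
  rw [← integral_indicator_one hs]
  rfl

theorem rearrangement_nonneg (f : E2 → ℝ) (x : E2) : 0 ≤ rearrangement f x :=
  (rearrangement_eq_measureReal f x).symm ▸ measureReal_nonneg

theorem measurable_rearrangement (f : E2 → ℝ) : Measurable (rearrangement f) := by
  have hanti : Antitone fun s : ℝ => volume.restrict (Ioi 0) {ξ | s < levelRadius f ξ} :=
    fun _ _ hs => measure_mono fun _ hξ => lt_of_le_of_lt hs hξ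
  simp_rw [funext (rearrangement_eq_measureReal f), measureReal_def]
  exact (hanti.measurable.ennreal_toReal).comp measurable_norm

theorem ofReal_rearrangement (hbdd : MemLp f ⊤ volume) (x : E2) :
    ENNReal.ofReal (rearrangement f x) = volume.restrict (Ioi 0) {ξ | ‖x‖ < levelRadius f ξ} := by
  have hsub : {ξ | ‖x‖ < levelRadius f ξ} ∩ Ioi 0 ⊆ Ioc 0 (eLpNorm f ⊤ volume).toReal :=
    fun ξ hξ => ⟨hξ.2, not_lt.1 fun h => by
      simpa [levelRadius_eq_zero hbdd h.le] using (norm_nonneg x).trans_lt hξ.1⟩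
  refine (rearrangement_eq_measureReal f x).symm ▸ ofReal_measureReal ?_
  rw [Measure.restrict_apply (measurableSet_lt measurable_const (measurable_levelRadius f))]
  exact ((measure_mono hsub).trans_lt measure_Ioc_lt_top).ne

end LevelSets

section LayerCake

variable {f : E2 → ℝ}

theorem restrict_Ioi_zero_apply_Iio (a : ℝ) :
    volume.restrict (Ioi (0 : ℝ)) {ξ | ξ < a} = ENNReal.ofReal a := by
  rw [show {ξ : ℝ | ξ < a} = Iio a from rfl, Measure.restrict_apply measurableSet_Iio,
    Iio_inter_Ioi, Real.volume_Ioo, sub_zero]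

theorem measurableSet_subgraph (hmeas : Measurable f) :
    MeasurableSet {p : E2 × ℝ | p.2 < f p.1} :=
  measurableSet_lt measurable_snd (hmeas.comp measurable_fst)

theorem measurableSet_rearrangement_subgraph (f : E2 → ℝ) :
    MeasurableSet {p : E2 × ℝ | ‖p.1‖ < levelRadius f p.2} :=
  measurableSet_lt measurable_fst.norm ((measurable_levelRadius f).comp measurable_snd)

theorem lintegral_ofReal_sq_norm_mul_eq {g : E2 → ℝ} {s : Set (E2 × ℝ)} (hs : MeasurableSet s)
    (hg : ∀ x, ENNReal.ofReal (g x) = volume.restrict (Ioi 0) (Prod.mk x ⁻¹' s)) :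
    ∫⁻ x, ENNReal.ofReal (‖x‖ ^ 2 * g x) =
      ∫⁻ ξ in Ioi 0, ∫⁻ x in (·, ξ) ⁻¹' s, ENNReal.ofReal (‖x‖ ^ 2) := by
  simp_rw [ENNReal.ofReal_mul (sq_nonneg _), hg]
  exact lintegral_mul_measure_slice (measurable_norm.pow_const 2).ennreal_ofReal hs

theorem lintegral_sq_norm_mul_eq (hmeas : Measurable f) :
    ∫⁻ x, ENNReal.ofReal (‖x‖ ^ 2 * f x) =
      ∫⁻ ξ in Ioi 0, ∫⁻ x in {y | ξ < f y}, ENNReal.ofReal (‖x‖ ^ 2) :=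
  lintegral_ofReal_sq_norm_mul_eq (measurableSet_subgraph hmeas) fun _ =>
    (restrict_Ioi_zero_apply_Iio _).symm

theorem lintegral_sq_norm_mul_rearrangement_eq (hbdd : MemLp f ⊤ volume) :
    ∫⁻ x, ENNReal.ofReal (‖x‖ ^ 2 * rearrangement f x) =
      ∫⁻ ξ in Ioi 0, ∫⁻ x in ball (0 : E2) (levelRadius f ξ), ENNReal.ofReal (‖x‖ ^ 2) := by
  simp_rw [ball_zero_eq]
  exact lintegral_ofReal_sq_norm_mul_eq (measurableSet_rearrangement_subgraph f)
    (ofReal_rearrangement hbdd)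

theorem lintegral_sq_norm_mul_rearrangement_add_le (hmeas : Measurable f)
    (hbdd : MemLp f ⊤ volume) (hJ : Integrable (fun x : E2 => ‖x‖ ^ 2 * f x)) :
    ENNReal.ofReal (4 * π) * (∫⁻ x, ENNReal.ofReal (‖x‖ ^ 2 * rearrangement f x)) +
        ∫⁻ ξ in Ioi 0, volume ({y | ξ < f y} ∆ ball (0 : E2) (levelRadius f ξ)) ^ 2 ≤
      ENNReal.ofReal (4 * π) * ∫⁻ x, ENNReal.ofReal (‖x‖ ^ 2 * f x) := by
  rw [lintegral_sq_norm_mul_rearrangement_eq hbdd, lintegral_sq_norm_mul_eq hmeas,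
    ← lintegral_const_mul' _ _ ofReal_ne_top, ← lintegral_const_mul' _ _ ofReal_ne_top]
  refine (le_lintegral_add _ _).trans (setLIntegral_mono' measurableSet_Ioi fun ξ hξ => ?_)
  exact lintegral_sq_norm_ball_add_sq_volume_symmDiff_le (measurableSet_lt measurable_const hmeas)
    (Real.sqrt_nonneg _) (volume_ball_levelRadius (volume_superlevel_ne_top hJ hξ)).symm

theorem lintegral_abs_sub_rearrangement_le (hmeas : Measurable f) (hpos : ∀ x, 0 ≤ f x)
    (hbdd : MemLp f ⊤ volume) :
    ∫⁻ x, ENNReal.ofReal |f x - rearrangement f x| ≤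
      ∫⁻ ξ in Ioi 0, volume ({y | ξ < f y} ∆ ball (0 : E2) (levelRadius f ξ)) := by
  set s := {p : E2 × ℝ | p.2 < f p.1} ∆ {p | ‖p.1‖ < levelRadius f p.2}
  have hs : MeasurableSet s :=
    (measurableSet_subgraph hmeas).symmDiff (measurableSet_rearrangement_subgraph f)
  have hslice (x : E2) :
      ENNReal.ofReal |f x - rearrangement f x| ≤ volume.restrict (Ioi 0) (Prod.mk x ⁻¹' s) := by
    have hf : f x = (volume.restrict (Ioi 0)).real {ξ | ξ < f x} := by
      rw [measureReal_def, restrict_Ioi_zero_apply_Iio, toReal_ofReal (hpos x)]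
    rw [preimage_symmDiff, hf, rearrangement_eq_measureReal]
    refine ENNReal.ofReal_le_of_le_toReal (abs_measureReal_sub_le_measureReal_symmDiff'
      measurableSet_Iio.nullMeasurableSet
      (measurableSet_lt measurable_const (measurable_levelRadius f)).nullMeasurableSet ?_ ?_)
    · exact (restrict_Ioi_zero_apply_Iio _).symm ▸ ofReal_ne_top
    · exact ofReal_rearrangement hbdd x ▸ ofReal_ne_top
  calc ∫⁻ x, ENNReal.ofReal |f x - rearrangement f x|
      ≤ ∫⁻ x, volume.restrict (Ioi 0) (Prod.mk x ⁻¹' s) := lintegral_mono hslice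
    _ = ∫⁻ ξ in Ioi 0, volume ((·, ξ) ⁻¹' s) :=
        (Measure.prod_apply hs).symm.trans (Measure.prod_apply_symm hs)
    _ = _ := by simp_rw [s, preimage_symmDiff, ball_zero_eq]; rfl

end LayerCake

section Estimate

variable {f : E2 → ℝ}

theorem volume_superlevel_symmDiff_eq_zero (hbdd : MemLp f ⊤ volume) {ξ : ℝ}
    (hξ : (eLpNorm f ⊤ volume).toReal ≤ ξ) :
    volume ({y | ξ < f y} ∆ ball (0 : E2) (levelRadius f ξ)) = 0 := by
  rw [levelRadius_eq_zero hbdd hξ, ball_zero, ← bot_eq_empty, symmDiff_bot,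
    volume_superlevel_eq_zero hbdd hξ]

theorem measurable_volume_superlevel_symmDiff (hmeas : Measurable f) :
    Measurable fun ξ => volume ({y | ξ < f y} ∆ ball (0 : E2) (levelRadius f ξ)) := by
  have := measurable_measure_prodMk_right (μ := volume)
    ((measurableSet_subgraph hmeas).symmDiff (measurableSet_rearrangement_subgraph f))
  simpa only [preimage_symmDiff, preimage_ofPred_eq, ball_zero_eq] using this

theorem sq_lintegral_abs_sub_rearrangement_le (hmeas : Measurable f) (hpos : ∀ x, 0 ≤ f x)
    (hbdd : MemLp f ⊤ volume) :
    (∫⁻ x, ENNReal.ofReal |f x - rearrangement f x|) ^ 2 ≤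
      ENNReal.ofReal (eLpNorm f ⊤ volume).toReal *
        ∫⁻ ξ in Ioi 0, volume ({y | ξ < f y} ∆ ball (0 : E2) (levelRadius f ξ)) ^ 2 := by
  set M := (eLpNorm f ⊤ volume).toReal
  set D := fun ξ => volume ({y | ξ < f y} ∆ ball (0 : E2) (levelRadius f ξ))
  have hD : ∫⁻ ξ in Ioi 0, D ξ = ∫⁻ ξ in Ioc 0 M, D ξ := by
    rw [← Ioc_union_Ioi_eq_Ioi toReal_nonneg, lintegral_union measurableSet_Ioi
      Ioc_disjoint_Ioi_same, setLIntegral_congr_fun measurableSet_Ioi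
      fun ξ hξ => volume_superlevel_symmDiff_eq_zero hbdd (le_of_lt hξ), lintegral_zero, add_zero]
  calc (∫⁻ x, ENNReal.ofReal |f x - rearrangement f x|) ^ 2
      ≤ (∫⁻ ξ in Ioc 0 M, D ξ) ^ 2 := by
        gcongr
        exact (lintegral_abs_sub_rearrangement_le hmeas hpos hbdd).trans hD.le
    _ ≤ volume.restrict (Ioc 0 M) univ * ∫⁻ ξ in Ioc 0 M, D ξ ^ 2 :=
        sq_lintegral_le_measure_univ_mul (measurable_volume_superlevel_symmDiff hmeas).aemeasurable
    _ ≤ ENNReal.ofReal M * ∫⁻ ξ in Ioi 0, D ξ ^ 2 := by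
        rw [Measure.restrict_apply_univ, Real.volume_Ioc, sub_zero]
        exact mul_le_mul_right (lintegral_mono_set Ioc_subset_Ioi_self) _

end Estimate

theorem ENNReal.toReal_sq_le_mul_sub_of_le {L X J J' : ℝ≥0∞} {c M : ℝ} (hc : 0 < c) (hM : 0 ≤ M)
    (hJ : J ≠ ∞) (hL : L ^ 2 ≤ ENNReal.ofReal M * X)
    (hX : ENNReal.ofReal c * J' + X ≤ ENNReal.ofReal c * J) :
    L.toReal ^ 2 ≤ c * M * (J.toReal - J'.toReal) := by
  have hcJ : ENNReal.ofReal c * J ≠ ∞ := mul_ne_top ofReal_ne_top hJ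
  have hJ' : J' ≠ ∞ := by
    refine ne_top_of_le_ne_top hJ ((ENNReal.mul_le_mul_iff_right ?_ ofReal_ne_top).1
      (le_self_add.trans hX))
    simpa using hc
  have hX' : X ≠ ∞ := ne_top_of_le_ne_top hcJ (le_add_self.trans hX)
  have hXle : X.toReal ≤ c * J.toReal - c * J'.toReal := by
    have := ENNReal.toReal_mono hcJ hX
    rw [toReal_add (mul_ne_top ofReal_ne_top hJ') hX', toReal_mul, toReal_mul,
      toReal_ofReal hc.le] at this
    linarith
  calc L.toReal ^ 2 = (L ^ 2).toReal := (toReal_pow _ _).symm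
    _ ≤ (ENNReal.ofReal M * X).toReal := toReal_mono (mul_ne_top ofReal_ne_top hX') hL
    _ = M * X.toReal := by rw [toReal_mul, toReal_ofReal hM]
    _ ≤ c * M * (J.toReal - J'.toReal) := by nlinarith

/-- `‖f − f*‖_{L¹}² ≤ 4π ‖f‖_∞ (J(f) − J(f*))`. -/
theorem rearrangement_L1_impulse_estimate
    (f : E2 → ℝ) (hmeas : Measurable f) (hpos : ∀ x, 0 ≤ f x)
    (hbdd : MemLp f ⊤ volume)
    (hJ : Integrable (fun x : E2 => ‖x‖ ^ 2 * f x)) :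
    (∫ x : E2, |f x - rearrangement f x|) ^ 2 ≤
      4 * Real.pi * (eLpNorm f ⊤ volume).toReal *
        ((∫ x : E2, ‖x‖ ^ 2 * f x) - ∫ x : E2, ‖x‖ ^ 2 * rearrangement f x) := by
  have hf_star := measurable_rearrangement f
  rw [integral_eq_lintegral_of_nonneg_ae (f := fun x => |f x - rearrangement f x|)
      (.of_forall fun x => abs_nonneg _) (hmeas.sub hf_star).abs.aestronglyMeasurable,
    integral_eq_lintegral_of_nonneg_ae (.of_forall fun x => mul_nonneg (sq_nonneg _) (hpos x))
      hJ.aestronglyMeasurable,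
    integral_eq_lintegral_of_nonneg_ae
      (.of_forall fun x => mul_nonneg (sq_nonneg _) (rearrangement_nonneg f x))
      ((measurable_norm.pow_const 2).mul hf_star).aestronglyMeasurable]
  exact ENNReal.toReal_sq_le_mul_sub_of_le (by positivity) toReal_nonneg
    hJ.lintegral_lt_top.ne (sq_lintegral_abs_sub_rearrangement_le hmeas hpos hbdd)
    (lintegral_sq_norm_mul_rearrangement_add_le hmeas hbdd hJ)
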